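/- Let E = Aff(Q,A,g,f,θ) be a central extension of a left quasigroup Q by an abelian group A, and let p_1 : E → Q be the projection (x,a) ↦ x. Then the congruence ker p_1 of E is a central congruence, i.e. C(ker p_1, 1_E; 0_E) holds. -/

import Mathlib

namespace PaperLQ

/-- A left quasigroup `(Q, ⬝, \)`: `x ⬝ (x \ y) = y = x \ (x ⬝ y)`. -/
structure LeftQuasigroup (Q : Type*) where
  mul : Q → Q → Q
  ldiv : Q → Q → Q
  mul_ldiv : ∀ x y, mul x (ldiv x y) = y
  ldiv_mul : ∀ x y, ldiv x (mul x y) = y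

namespace LeftQuasigroup

variable {Q : Type*}

/-- The left translation `L_x : y ↦ x ⬝ y`, as a permutation of `Q`. -/
def L (S : LeftQuasigroup Q) (x : Q) : Equiv.Perm Q where
  toFun := S.mul x
  invFun := S.ldiv x
  left_inv := S.ldiv_mul x
  right_inv := S.mul_ldiv x

/-- The left multiplication group `LMlt(Q) = ⟨L_x : x ∈ Q⟩`. -/
def LMlt (S : LeftQuasigroup Q) : Subgroup (Equiv.Perm Q) :=
  Subgroup.closure (Set.range S.L)

/-- The displacement group `Dis(Q) = ⟨L_x L_y⁻¹ : x, y ∈ Q⟩`. -/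
def Dis (S : LeftQuasigroup Q) : Subgroup (Equiv.Perm Q) :=
  Subgroup.closure {g : Equiv.Perm Q | ∃ x y : Q, g = S.L x * (S.L y)⁻¹}

/-- The orbit equivalence `O_N` of a subgroup `N`: `x O_N y` iff `x = h y` for some `h ∈ N`. -/
def orbRel (N : Subgroup (Equiv.Perm Q)) : Setoid Q where
  r x y := ∃ h ∈ N, x = h y
  iseqv := by
    constructor
    · exact fun x => ⟨1, N.one_mem, rfl⟩
    · rintro x y ⟨h, hh, rfl⟩
      exact ⟨h⁻¹, N.inv_mem hh, (Equiv.symm_apply_apply h y).symm⟩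
    · rintro x y z ⟨h, hh, rfl⟩ ⟨k, hk, rfl⟩
      exact ⟨h * k, N.mul_mem hh hk, (Equiv.Perm.mul_apply h k z).symm⟩

/-- The equivalence `c_N`: `x c_N y` iff `L_x L_y⁻¹ ∈ N`. -/
def cRel (S : LeftQuasigroup Q) (N : Subgroup (Equiv.Perm Q)) : Setoid Q where
  r x y := S.L x * (S.L y)⁻¹ ∈ N
  iseqv := by
    constructor
    · intro x; simpa using N.one_mem
    · intro x y h; simpa [mul_inv_rev] using N.inv_mem h
    · intro x y z h h'; simpa [mul_assoc] using N.mul_mem h h'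

/-- The Cayley kernel `λ_Q`: `x λ_Q y` iff `L_x = L_y`. -/
def cayley (S : LeftQuasigroup Q) : Setoid Q where
  r x y := S.L x = S.L y
  iseqv := ⟨fun _ => rfl, Eq.symm, Eq.trans⟩

/-- `α` is a congruence of the left quasigroup. -/
def IsCongruence (S : LeftQuasigroup Q) (α : Setoid Q) : Prop :=
  ∀ ⦃x y z t : Q⦄, α.r x z → α.r y t →
    α.r (S.mul x y) (S.mul z t) ∧ α.r (S.ldiv x y) (S.ldiv z t)

/-- The relative displacement group `Dis_α = ⟨h L_x L_y⁻¹ h⁻¹ : x α y, h ∈ LMlt(Q)⟩`. -/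
def disRel (S : LeftQuasigroup Q) (α : Setoid Q) : Subgroup (Equiv.Perm Q) :=
  Subgroup.closure
    {g : Equiv.Perm Q | ∃ x y h, α.r x y ∧ h ∈ S.LMlt ∧ g = h * (S.L x * (S.L y)⁻¹) * h⁻¹}

/-- The subgroup of permutations moving every point inside its `α`-class. -/
def apprSub (α : Setoid Q) : Subgroup (Equiv.Perm Q) where
  carrier := {h : Equiv.Perm Q | ∀ x : Q, α.r (h x) x}
  one_mem' := fun x => by
    simpa using α.iseqv.refl x
  mul_mem' := fun {a b} ha hb x => by
    rw [Equiv.Perm.mul_apply]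
    exact α.iseqv.trans (ha (b x)) (hb x)
  inv_mem' := fun {a} ha x => by
    have h := ha (a⁻¹ x)
    rw [show a (a⁻¹ x) = x from Equiv.apply_symm_apply a x] at h
    exact α.iseqv.symm h

/-- The group `Dis^α = {h ∈ Dis(Q) : h(x) α x for all x}`. -/
def disCo (S : LeftQuasigroup Q) (α : Setoid Q) : Subgroup (Equiv.Perm Q) :=
  S.Dis ⊓ apprSub α

/-- `N ∈ Norm'(Q)`: a normal subgroup of `LMlt(Q)` with `N ≤ Dis(Q)` and `O_N ≤ c_N`. -/
def MemNorm' (S : LeftQuasigroup Q) (N : Subgroup (Equiv.Perm Q)) : Prop :=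
  N ≤ S.Dis ∧ (∀ h ∈ S.LMlt, ∀ n ∈ N, h * n * h⁻¹ ∈ N) ∧ orbRel N ≤ S.cRel N

/-- The quotient left quasigroup `Q/α` for a congruence `α`. -/
def quot (S : LeftQuasigroup Q) (α : Setoid Q) (hα : S.IsCongruence α) :
    LeftQuasigroup (Quotient α) where
  mul := Quotient.lift₂ (fun x y => Quotient.mk α (S.mul x y))
    (fun _ _ _ _ h h' => Quotient.sound (hα h h').1)
  ldiv := Quotient.lift₂ (fun x y => Quotient.mk α (S.ldiv x y))
    (fun _ _ _ _ h h' => Quotient.sound (hα h h').2)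
  mul_ldiv := fun a b => Quotient.inductionOn₂ a b fun x y => by
    show Quotient.mk α (S.mul x (S.ldiv x y)) = Quotient.mk α y
    rw [S.mul_ldiv]
  ldiv_mul := fun a b => Quotient.inductionOn₂ a b fun x y => by
    show Quotient.mk α (S.ldiv x (S.mul x y)) = Quotient.mk α y
    rw [S.ldiv_mul]

/-- The image `π_α(N)` of a subgroup `N ≤ LMlt(Q)` in `Sym(Q/α)`: the permutations of
`Q/α` induced by some element of `N`. -/
def pushSub (α : Setoid Q) (N : Subgroup (Equiv.Perm Q)) :
    Subgroup (Equiv.Perm (Quotient α)) where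
  carrier := {g | ∃ h ∈ N, ∀ x : Q, g (Quotient.mk α x) = Quotient.mk α (h x)}
  one_mem' := ⟨1, N.one_mem, fun x => rfl⟩
  mul_mem' := fun {g₁ g₂} h₁ h₂ => by
    obtain ⟨k₁, hk₁, e₁⟩ := h₁
    obtain ⟨k₂, hk₂, e₂⟩ := h₂
    exact ⟨k₁ * k₂, N.mul_mem hk₁ hk₂, fun x => by
      rw [Equiv.Perm.mul_apply, Equiv.Perm.mul_apply, e₂ x, e₁ (k₂ x)]⟩
  inv_mem' := fun {g} h => by
    obtain ⟨k, hk, e⟩ := h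
    refine ⟨k⁻¹, N.inv_mem hk, fun x => ?_⟩
    have h' := e (k⁻¹ x)
    rw [show k (k⁻¹ x) = x from Equiv.apply_symm_apply k x] at h'
    rw [← h', show ∀ y, g⁻¹ (g y) = y from Equiv.symm_apply_apply g]

/-- `Q` is faithful if the Cayley kernel is trivial. -/
def Faithful (S : LeftQuasigroup Q) : Prop := S.cayley = ⊥

/-- `Q` is sharp: whenever `α ≤ β` are congruences with `β/α ≤ λ_{Q/α}`, then `α = β`. -/
def Sharp (S : LeftQuasigroup Q) : Prop :=
  ∀ (α β : Setoid Q) (hα : S.IsCongruence α), S.IsCongruence β → α ≤ β →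
    (∀ x y : Q, β.r x y →
      (S.quot α hα).L (Quotient.mk α x) = (S.quot α hα).L (Quotient.mk α y)) →
    α = β

/-- `Q` has congruences determined by orbits: `Dis^* : Con(Q) → Norm'(Q)` and
`O_* : Norm'(Q) → Con(Q)` are mutually inverse isomorphisms. -/
def CDOs (S : LeftQuasigroup Q) : Prop :=
  (∀ α : Setoid Q, S.IsCongruence α → orbRel (S.disCo α) = α) ∧
  (∀ N : Subgroup (Equiv.Perm Q), S.MemNorm' N → S.disCo (orbRel N) = N)

/-- `Q` has congruences determined by subgroups: `Dis_* : Con(Q) → Norm'(Q)` and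
`c_* : Norm'(Q) → Con(Q)` are mutually inverse isomorphisms. -/
def CDSg (S : LeftQuasigroup Q) : Prop :=
  (∀ α : Setoid Q, S.IsCongruence α → S.cRel (S.disRel α) = α) ∧
  (∀ N : Subgroup (Equiv.Perm Q), S.MemNorm' N → S.disRel (S.cRel N) = N)

/-- `Q` is connected: `LMlt(Q)` acts transitively. -/
def Connected (S : LeftQuasigroup Q) : Prop :=
  ∀ x y : Q, ∃ h ∈ S.LMlt, x = h y

/-- The subalgebra structure on a subset closed under `⬝` and `\`. -/
def sub (S : LeftQuasigroup Q) (T : Set Q)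
    (hm : ∀ ⦃x⦄, x ∈ T → ∀ ⦃y⦄, y ∈ T → S.mul x y ∈ T)
    (hd : ∀ ⦃x⦄, x ∈ T → ∀ ⦃y⦄, y ∈ T → S.ldiv x y ∈ T) : LeftQuasigroup T where
  mul a b := ⟨S.mul a b, hm a.2 b.2⟩
  ldiv a b := ⟨S.ldiv a b, hd a.2 b.2⟩
  mul_ldiv a b := Subtype.ext (S.mul_ldiv a b)
  ldiv_mul a b := Subtype.ext (S.ldiv_mul a b)

/-- `Q` is superconnected: every subalgebra is connected. -/
def Superconnected (S : LeftQuasigroup Q) : Prop :=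
  ∀ (T : Set Q) (hm : ∀ ⦃x⦄, x ∈ T → ∀ ⦃y⦄, y ∈ T → S.mul x y ∈ T)
    (hd : ∀ ⦃x⦄, x ∈ T → ∀ ⦃y⦄, y ∈ T → S.ldiv x y ∈ T),
    (S.sub T hm hd).Connected

/-- `Q` is idempotent: `x ⬝ x = x`. -/
def Idempotent (S : LeftQuasigroup Q) : Prop := ∀ x : Q, S.mul x x = x

/-- `Q` is latin: all right translations are bijective. -/
def Latin (S : LeftQuasigroup Q) : Prop :=
  ∀ x : Q, Function.Bijective fun y => S.mul y x

/-- `Q` is semiregular: the stabilizer of any point in `Dis(Q)` is trivial. -/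
def Semiregular (S : LeftQuasigroup Q) : Prop :=
  ∀ x : Q, ∀ h ∈ S.Dis, h x = x → h = 1

/-- The term operations of a left quasigroup: the clone generated by `⬝` and `\`. -/
inductive IsTermOp (S : LeftQuasigroup Q) : {n : ℕ} → ((Fin n → Q) → Q) → Prop
  | proj {n : ℕ} (i : Fin n) : IsTermOp S fun v => v i
  | mul {n : ℕ} {t s : (Fin n → Q) → Q} :
      IsTermOp S t → IsTermOp S s → IsTermOp S fun v => S.mul (t v) (s v)
  | ldiv {n : ℕ} {t s : (Fin n → Q) → Q} :
      IsTermOp S t → IsTermOp S s → IsTermOp S fun v => S.ldiv (t v) (s v)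

/-- The centrality relation `C(α, β; δ)` of commutator theory. -/
def Centralizes (S : LeftQuasigroup Q) (α β δ : Setoid Q) : Prop :=
  ∀ (n : ℕ) (t : (Fin (n + 1) → Q) → Q), S.IsTermOp t →
    ∀ x y : Q, α.r x y → ∀ z u : Fin n → Q, (∀ i, β.r (z i) (u i)) →
      δ.r (t (Fin.cons x z)) (t (Fin.cons x u)) →
      δ.r (t (Fin.cons y z)) (t (Fin.cons y u))

/-- The center `ζ_Q`: the largest central congruence. -/
def center (S : LeftQuasigroup Q) : Setoid Q :=
  sSup {β : Setoid Q | S.IsCongruence β ∧ S.Centralizes β ⊤ ⊥}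

/-- The upper central series: `ζ_0 = 0_Q` and `ζ_{n+1}/ζ_n = ζ_{Q/ζ_n}`. -/
def zeta (S : LeftQuasigroup Q) : ℕ → Setoid Q
  | 0 => ⊥
  | n + 1 =>
      sSup {β : Setoid Q | S.IsCongruence β ∧ S.zeta n ≤ β ∧ S.Centralizes β ⊤ (S.zeta n)}

/-- `Q` is nilpotent: the upper central series reaches `1_Q`. -/
def Nilpotent (S : LeftQuasigroup Q) : Prop := ∃ n : ℕ, S.zeta n = ⊤

/-- The variety generated by `Q` has a Malt'sev term. -/
def Maltsev (S : LeftQuasigroup Q) : Prop :=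
  ∃ m : Q → Q → Q → Q,
    S.IsTermOp (n := 3) (fun v => m (v 0) (v 1) (v 2)) ∧
    ∀ x y : Q, m x y y = x ∧ m y y x = x

/-- The central extension `E = Aff(Q, A, g, f, θ)` of `Q` by an abelian group `A`. -/
def affExt (S : LeftQuasigroup Q) (A : Type*) [AddCommGroup A]
    (g : A →+ A) (f : AddAut A) (θ : Q → Q → A) : LeftQuasigroup (Q × A) where
  mul p q := (S.mul p.1 q.1, g p.2 + f q.2 + θ p.1 q.1)
  ldiv p q := (S.ldiv p.1 q.1, f.symm (q.2 - g p.2 - θ p.1 (S.ldiv p.1 q.1)))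
  mul_ldiv := by
    rintro ⟨x, a⟩ ⟨y, b⟩
    dsimp only
    rw [S.mul_ldiv, AddEquiv.apply_symm_apply]
    refine Prod.ext rfl ?_
    dsimp only
    abel
  ldiv_mul := by
    rintro ⟨x, a⟩ ⟨y, b⟩
    dsimp only
    rw [S.ldiv_mul]
    refine Prod.ext rfl ?_
    dsimp only
    have h : g a + f b + θ x y - g a - θ x y = f b := by abel
    rw [h, AddEquiv.symm_apply_apply]

/-- The affine left quasigroup `Aff(A, g, f, c)`: `a ⬝ b = g(a) + f(b) + c`. -/
def affine {A : Type*} [AddCommGroup A] (g : A →+ A) (f : AddAut A) (c : A) :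
    LeftQuasigroup A where
  mul a b := g a + f b + c
  ldiv a b := f.symm (b - g a - c)
  mul_ldiv := by
    intro a b
    try dsimp only
    rw [AddEquiv.apply_symm_apply]
    abel
  ldiv_mul := by
    intro a b
    try dsimp only
    have h : g a + f b + c - g a - c = f b := by abel
    rw [h, AddEquiv.symm_apply_apply]

/-- The relation `α_N` on `Q × A`: `(x,a) α_N (y,b)` iff `x = y` and `a - b ∈ N`. -/
def prodCongr (Q : Type*) {A : Type*} [AddCommGroup A] (N : AddSubgroup A) :
    Setoid (Q × A) where
  r p q := p.1 = q.1 ∧ p.2 - q.2 ∈ N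
  iseqv := by
    constructor
    · exact fun p => ⟨rfl, by simpa using N.zero_mem⟩
    · rintro p q ⟨h1, h2⟩
      exact ⟨h1.symm, by simpa using N.neg_mem h2⟩
    · rintro p q r ⟨h1, h2⟩ ⟨h1', h2'⟩
      exact ⟨h1.trans h1', by simpa [sub_add_sub_cancel] using N.add_mem h2 h2'⟩

/- Every term operation of `Aff(Q,A,g,f,θ)` is affine in the `A`-coordinates, with a linear part
that does not depend on the `Q`-coordinates. Hence replacing `x` by `y` with the same first
coordinate shifts `t(x,z)` and `t(x,u)` by the same element of `A` and keeps their first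
coordinates, so an equality `t(x,z) = t(x,u)` survives the replacement. -/

section AffineForm

variable {A : Type*} [AddCommGroup A] {n : ℕ}

def HasAffineForm (t : (Fin n → Q × A) → Q × A) : Prop :=
  ∃ (T : (Fin n → Q) → Q) (ψ : (Fin n → A) →+ A) (κ : (Fin n → Q) → A),
    ∀ v, t v = (T (Prod.fst ∘ v), ψ (Prod.snd ∘ v) + κ (Prod.fst ∘ v))

theorem IsTermOp.hasAffineForm {S : LeftQuasigroup Q} {g : A →+ A} {f : AddAut A}
    {θ : Q → Q → A} {t : (Fin n → Q × A) → Q × A}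
    (ht : (S.affExt A g f θ).IsTermOp t) : HasAffineForm t := by
  induction ht with
  | proj i => exact ⟨fun w => w i, Pi.evalAddMonoidHom (fun _ => A) i, 0,
    fun v => Prod.ext rfl (add_zero _).symm⟩
  | mul _ _ ih₁ ih₂ =>
    obtain ⟨T₁, ψ₁, κ₁, e₁⟩ := ih₁
    obtain ⟨T₂, ψ₂, κ₂, e₂⟩ := ih₂
    refine ⟨fun w => S.mul (T₁ w) (T₂ w), g.comp ψ₁ + (f : A →+ A).comp ψ₂,
      fun w => g (κ₁ w) + f (κ₂ w) + θ (T₁ w) (T₂ w), fun v => ?_⟩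
    simp only [affExt, e₁ v, e₂ v, Prod.mk.injEq, true_and, map_add, AddMonoidHom.add_apply,
      AddMonoidHom.coe_comp, AddMonoidHom.coe_coe, Function.comp_apply]
    abel
  | ldiv _ _ ih₁ ih₂ =>
    obtain ⟨T₁, ψ₁, κ₁, e₁⟩ := ih₁
    obtain ⟨T₂, ψ₂, κ₂, e₂⟩ := ih₂
    refine ⟨fun w => S.ldiv (T₁ w) (T₂ w), (f.symm : A →+ A).comp (ψ₂ - g.comp ψ₁),
      fun w => f.symm (κ₂ w - g (κ₁ w) - θ (T₁ w) (S.ldiv (T₁ w) (T₂ w))), fun v => ?_⟩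
    simp only [affExt, e₁ v, e₂ v, Prod.mk.injEq, true_and, AddMonoidHom.coe_comp,
      AddMonoidHom.coe_coe, Function.comp_apply, AddMonoidHom.sub_apply, ← map_add]
    congr 1
    rw [map_add]
    abel

theorem HasAffineForm.exists_shift_of_comp_fst_eq {t : (Fin n → Q × A) → Q × A}
    (ht : HasAffineForm t) :
    ∃ ψ : (Fin n → A) →+ A, ∀ v w, Prod.fst ∘ v = Prod.fst ∘ w →
      t w = ((t v).1, (t v).2 + ψ (Prod.snd ∘ w - Prod.snd ∘ v)) := by
  obtain ⟨T, ψ, κ, e⟩ := ht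
  refine ⟨ψ, fun v w hvw => ?_⟩
  rw [e v, e w, hvw, map_sub]
  simp only [Prod.mk.injEq, true_and]
  abel

end AffineForm

/-- `ker p₁` is a central congruence of the central extension `Aff(Q,A,g,f,θ)`. -/
theorem statement_13 {Q : Type*} {A : Type*} [AddCommGroup A] (S : LeftQuasigroup Q)
    (g : A →+ A) (f : AddAut A) (θ : Q → Q → A) :
    (S.affExt A g f θ).Centralizes (Setoid.ker (Prod.fst : Q × A → Q)) ⊤ ⊥ := by
  intro n t ht x y hxy z u _ h
  obtain ⟨ψ, hψ⟩ := ht.hasAffineForm.exists_shift_of_comp_fst_eq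
  have shift : ∀ w : Fin n → Q × A, t (Fin.cons y w) =
      ((t (Fin.cons x w)).1, (t (Fin.cons x w)).2 + ψ (Fin.cons (y.2 - x.2) 0)) := by
    intro w
    rw [hψ (Fin.cons x w) (Fin.cons y w) (by rw [Fin.comp_cons, Fin.comp_cons, hxy]),
      Fin.comp_cons, Fin.comp_cons]
    congr 3
    ext i
    cases i using Fin.cases <;> simp
  rw [Setoid.bot_def] at h ⊢
  rw [shift, shift, h]

end LeftQuasigroup

end PaperLQ
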